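/- arXiv:2104.05516 — 2 statements merged into one kernel-verified Lean document; each statement's English description precedes it below -/
import Mathlib

section
/- Local versus global consistency: for an n-party protocol given by deterministic next-message functions, an n-tuple of views is pairwise consistent (every pair of views has matching incoming and outgoing messages) if and only if there exists an honest execution of the protocol with some choice of inputs and random tapes in which each view is exactly the view of the corresponding party. -/
/-- The view of a party: its input, its random tape, and for every round
(of the `R` rounds) the message received from each of the `n` parties. -/
structure ProtoView (n : ℕ) (I Rnd M : Type) (R : ℕ) where
  inp : I
  rnd : Rnd
  recvd : Fin R → Fin n → M

/-- The messages sent by a party holding view `v`, as computed in round `r`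
from the prefix of its view, using the next-message function `nm`.
`nm i x ρ hist` takes the party index, its input, its random tape and the list
of message-vectors received in the previous rounds, and returns the messages
it sends (one per party) in the next round. -/
def sentBy {n : ℕ} {I Rnd M : Type} {R : ℕ}
    (nm : Fin n → I → Rnd → List (Fin n → M) → (Fin n → M))
    (i : Fin n) (v : ProtoView n I Rnd M R) (r : Fin R) : Fin n → M :=
  nm i v.inp v.rnd
    (List.ofFn (fun r' : Fin (r : ℕ) =>
      v.recvd ⟨(r' : ℕ), lt_trans r'.isLt r.isLt⟩))

/-- Views `vi` (of party `i`) and `vj` (of party `j`) are consistent: in every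
round, the message sent by `i` to `j` (implicit in `vi`) is the message `vj`
records as received from `i`, and vice versa. -/
def ConsistentViews {n : ℕ} {I Rnd M : Type} {R : ℕ}
    (nm : Fin n → I → Rnd → List (Fin n → M) → (Fin n → M))
    (i j : Fin n) (vi vj : ProtoView n I Rnd M R) : Prop :=
  (∀ r : Fin R, sentBy nm i vi r j = vj.recvd r i) ∧
  (∀ r : Fin R, sentBy nm j vj r i = vi.recvd r j)

/-- The honest execution: `execMsg nm x ρ r s t` is the message sent by
party `s` to party `t` in round `r`, when each party `k` has input `x k`
and random tape `ρ k`. -/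
def execMsg {n : ℕ} {I Rnd M : Type}
    (nm : Fin n → I → Rnd → List (Fin n → M) → (Fin n → M))
    (x : Fin n → I) (ρ : Fin n → Rnd) : ℕ → Fin n → Fin n → M
  | r, s, t =>
    nm s (x s) (ρ s)
      (List.ofFn (fun r' : Fin r => fun k => execMsg nm x ρ r' k s)) t
  termination_by r => r
  decreasing_by exact r'.isLt

/-- The view of party `i` in the honest execution with inputs `x` and
random tapes `ρ`. -/
def honestView {n : ℕ} {I Rnd M : Type} (R : ℕ)
    (nm : Fin n → I → Rnd → List (Fin n → M) → (Fin n → M))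
    (x : Fin n → I) (ρ : Fin n → Rnd) (i : Fin n) : ProtoView n I Rnd M R :=
  ⟨x i, ρ i, fun r k => execMsg nm x ρ (r : ℕ) k i⟩

/-- Local vs. global consistency: an `n`-tuple of views is
pairwise consistent iff there is an honest execution of the protocol (for some
inputs and random tapes) in which each view is exactly the view of the
corresponding party. -/
theorem local_global_consistency {n : ℕ} {I Rnd M : Type} {R : ℕ}
    (nm : Fin n → I → Rnd → List (Fin n → M) → (Fin n → M))
    (V : Fin n → ProtoView n I Rnd M R) :
    (∀ i j : Fin n, ConsistentViews nm i j (V i) (V j)) ↔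
    (∃ (x : Fin n → I) (ρ : Fin n → Rnd),
      ∀ i : Fin n, V i = honestView R nm x ρ i) := by
  constructor
  · intro H
    set x : Fin n → I := fun i => (V i).inp with hx
    set ρ : Fin n → Rnd := fun i => (V i).rnd with hρ
    have key : ∀ r : ℕ, ∀ hr : r < R, ∀ k i : Fin n,
        execMsg nm x ρ r k i = (V i).recvd ⟨r, hr⟩ k := by
      intro r
      induction r using Nat.strong_induction_on with
      | _ r ih =>
        intro hr k i
        rw [execMsg]
        have hist : (List.ofFn (fun r' : Fin r => fun t => execMsg nm x ρ r' t k))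
            = List.ofFn (fun r' : Fin r =>
                (V k).recvd ⟨(r' : ℕ), lt_trans r'.isLt hr⟩) := by
          congr 1
          funext r'
          funext t
          exact ih r' r'.isLt (lt_trans r'.isLt hr) t k
        rw [hist]
        exact (H k i).1 ⟨r, hr⟩
    refine ⟨x, ρ, fun i => ?_⟩
    cases hV : V i with
    | mk a b c =>
      simp only [honestView, ProtoView.mk.injEq]
      refine ⟨by rw [hx]; simp [hV], by rw [hρ]; simp [hV], ?_⟩
      funext r k
      have := key (r : ℕ) r.isLt k i
      rw [hV] at this
      exact (this).symm
  · rintro ⟨x, ρ, hV⟩ i j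
    have sent : ∀ (i j : Fin n) (r : Fin R),
        sentBy nm i (honestView R nm x ρ i) r j = execMsg nm x ρ (r : ℕ) i j := by
      intro i j r
      rw [execMsg]
      rfl
    constructor
    · intro r
      rw [hV i, hV j, sent]
      rfl
    · intro r
      rw [hV i, hV j, sent]
      rfl
end

section
/- Shamir secret sharing with threshold t is t-private: for any set S of at most t parties and any secret w, the joint distribution of shares in S (over a uniformly random degree-≤t polynomial with constant term w) is uniform on F^S, hence independent of w. -/
open Polynomial Finset
open scoped ENNReal

/-- Shamir secret sharing with threshold `t` is `t`-private:
for any set `S` of at most `t` parties and any secret `w`, the joint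
distribution of the shares in `S` — obtained by sampling the `t` non-constant
coefficients of the degree-≤t polynomial `p` with `p(0) = w` uniformly and
independently, the share of party `i` being `p(α i)` — is uniform on `F^S`,
hence independent of `w`. -/
theorem shamir_privacy (F : Type) [Field F] [Fintype F] [DecidableEq F]
    (n t : ℕ) (α : Fin n → F) (hinj : Function.Injective α)
    (hα : ∀ i, α i ≠ 0)
    (S : Finset (Fin n)) (hS : S.card ≤ t) (w : F) :
    (PMF.uniformOfFintype (Fin t → F)).map
        (fun c (i : ↥S) => w + ∑ k : Fin t, c k * (α i) ^ ((k : ℕ) + 1)) =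
      PMF.uniformOfFintype ((↥S) → F) := by
  classical
  set f : (Fin t → F) → (↥S → F) :=
    fun c (i : ↥S) => w + ∑ k : Fin t, c k * (α i) ^ ((k : ℕ) + 1) with hf
  -- Surjectivity via Lagrange interpolation
  have key : ∀ (y : ↥S → F), ∃ c : Fin t → F, f c = y := by
    intro y
    let v : Option ↥S → F := fun o => o.elim 0 (fun i => α i)
    have hv : Set.InjOn v (Finset.univ : Finset (Option ↥S)) := by
      intro a _ b _ hab
      match a, b with
      | none, none => rfl
      | none, some i => exact absurd hab.symm (hα i)
      | some i, none => exact absurd hab (hα i)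
      | some i, some j => exact congrArg some (Subtype.ext (hinj hab))
    let r : Option ↥S → F := fun o => o.elim w y
    let p := Lagrange.interpolate Finset.univ v r
    have hdeg : p.degree < ((S.card + 1 : ℕ) : WithBot ℕ) := by
      have h := Lagrange.degree_interpolate_lt (v := v) r hv
      have hcard : ((Finset.univ : Finset (Option ↥S)).card : WithBot ℕ)
          = ((S.card + 1 : ℕ) : WithBot ℕ) := by
        norm_cast
        simp [Finset.card_univ, Fintype.card_option]
      rwa [hcard] at h
    have hnd : p.natDegree < t + 1 := by
      by_cases hp : p = 0
      · simp [hp]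
      · rw [Polynomial.natDegree_lt_iff_degree_lt hp]
        refine lt_of_lt_of_le hdeg ?_
        exact Nat.cast_le.mpr (Nat.succ_le_succ hS)
    have heval : ∀ o : Option ↥S, p.eval (v o) = r o := fun o =>
      Lagrange.eval_interpolate_at_node r hv (Finset.mem_univ o)
    have hc0 : p.coeff 0 = w := by
      rw [Polynomial.coeff_zero_eq_eval_zero]
      simpa [v, r] using heval none
    refine ⟨fun k => p.coeff ((k : ℕ) + 1), ?_⟩
    funext i
    have h1 : p.eval (α i) = y i := by simpa [v, r] using heval (some i)
    rw [Polynomial.eval_eq_sum_range' hnd] at h1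
    rw [Finset.sum_range_succ'] at h1
    simp only [pow_zero, mul_one, hc0] at h1
    rw [hf]
    simp only
    rw [Fin.sum_univ_eq_sum_range (fun k => p.coeff (k + 1) * α i ^ (k + 1)), add_comm]
    exact h1
  -- all fibers of f have the same cardinality
  have hfib : ∀ y y' : ↥S → F,
      (Finset.univ.filter fun c => y = f c).card
        = (Finset.univ.filter fun c => y' = f c).card := by
    intro y y'
    obtain ⟨c0, hc0⟩ := key y
    obtain ⟨c0', hc0'⟩ := key y'
    have hstep : ∀ (a b b' : Fin t → F) (z z' : ↥S → F),
        f b = z → f b' = z' → f a = z → f (a - b + b') = z' := by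
      intro a b b' z z' hb hb' ha
      funext i
      have := congrFun hb i
      have := congrFun hb' i
      have := congrFun ha i
      simp only [hf] at *
      simp only [Pi.add_apply, Pi.sub_apply, sub_mul, add_mul, Finset.sum_add_distrib,
        Finset.sum_sub_distrib]
      linear_combination (congrFun ha i) - (congrFun hb i) + (congrFun hb' i)
    refine Finset.card_bij' (fun a _ => a - c0 + c0') (fun a _ => a - c0' + c0) ?_ ?_ ?_ ?_
    · intro a ha
      simp only [Finset.mem_filter, Finset.mem_univ, true_and] at ha ⊢
      exact (hstep a c0 c0' y y' hc0 hc0' ha.symm).symm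
    · intro a ha
      simp only [Finset.mem_filter, Finset.mem_univ, true_and] at ha ⊢
      exact (hstep a c0' c0 y' y hc0' hc0 ha.symm).symm
    · intro a _; ring
    · intro a _; ring
  -- counting
  set N : ℕ := (Finset.univ.filter fun c => f c = f (fun _ => 0)).card with hN
  have hNy : ∀ y : ↥S → F, (Finset.univ.filter fun c => y = f c).card = N := by
    intro y
    rw [hfib y (f (fun _ => 0)), hN]
    congr 1
    ext c
    simp [eq_comm]
  have hcount : N * Fintype.card (↥S → F) = Fintype.card (Fin t → F) := by
    have h := Finset.card_eq_sum_card_fiberwise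
      (f := f) (s := Finset.univ) (t := Finset.univ) (fun x _ => Finset.mem_univ _)
    have h2 : ∀ y ∈ (Finset.univ : Finset (↥S → F)),
        (Finset.univ.filter fun c => f c = y).card = N := by
      intro y _
      rw [← hNy y]; congr 1; ext c; simp [eq_comm]
    rw [Finset.sum_congr rfl h2, Finset.sum_const, smul_eq_mul, Finset.card_univ,
      Finset.card_univ] at h
    rw [h]; ring
  have hNpos : N ≠ 0 := by
    obtain ⟨c, hc⟩ := key (f (fun _ => 0))
    have : c ∈ Finset.univ.filter fun c => f c = f (fun _ => 0) := by
      simp [hc]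
    intro h0
    rw [hN] at h0
    exact Finset.card_ne_zero_of_mem this h0
  -- finish
  ext y
  rw [PMF.map_apply, PMF.uniformOfFintype_apply, tsum_fintype]
  simp only [PMF.uniformOfFintype_apply]
  rw [← Finset.sum_filter, Finset.sum_const, hNy y, nsmul_eq_mul]
  have hcast : (Fintype.card (Fin t → F) : ℝ≥0∞)
      = (N : ℝ≥0∞) * (Fintype.card (↥S → F) : ℝ≥0∞) := by
    exact_mod_cast hcount.symm
  rw [hcast, ENNReal.mul_inv (Or.inl (by exact_mod_cast hNpos)) (Or.inl (ENNReal.natCast_ne_top _)),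
    ← mul_assoc, ENNReal.mul_inv_cancel (by exact_mod_cast hNpos) (ENNReal.natCast_ne_top _),
    one_mul]
end
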